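/- arXiv:1607.01438 — 2 statements merged into one kernel-verified Lean document; each statement's English description precedes it below -/
import Mathlib

section
/- Let G be a finite connected graph, V₁ ⊂ V₂ nonempty proper subsets of its vertex set, and let S be an equivalence class of the relation ∼_{V₁} on V \ V₁ of minimum cardinality μ(V₁). If V₂ ∩ S is a nonempty proper subset of S, then the minimum cardinality μ(V₂) of an equivalence class of ∼_{V₂} on V \ V₂ is strictly less than μ(V₁). -/
/-! Enlarging `V₁` to `V₂` only refines the classes, so for `u ∈ S \ V₂` the `V₂`-class of `u` lies
in `S \ V₂`, which is strictly smaller than `S` because `V₂` meets `S`. -/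

open scoped Classical

variable {V : Type*} [Fintype V] [DecidableEq V]

/-- The equivalence class of `v` under the equal-metric-representation relation
with respect to `S`: all vertices outside `S` whose distance vector to `S`
agrees with that of `v`. -/
noncomputable def classOf (G : SimpleGraph V) (S : Finset V) (v : V) : Finset V :=
  Finset.univ.filter (fun u => u ∉ S ∧ ∀ w ∈ S, G.dist u w = G.dist v w)

/-- `mu G S` is the minimum cardinality of an equivalence class of the
equal-metric-representation relation on `V \ S`. -/
noncomputable def mu (G : SimpleGraph V) (S : Finset V) : ℕ :=
  sInf {n | ∃ v, v ∉ S ∧ n = (classOf G S v).card}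

lemma classOf_subset_sdiff {G : SimpleGraph V} {V₁ V₂ : Finset V} (h : V₁ ⊆ V₂) {u v : V}
    (hu : u ∈ classOf G V₁ v) : classOf G V₂ u ⊆ classOf G V₁ v \ V₂ := by
  simp only [classOf, Finset.mem_filter, Finset.mem_univ, true_and] at hu
  intro x hx
  simp only [classOf, Finset.mem_filter, Finset.mem_univ, true_and, Finset.mem_sdiff] at hx ⊢
  exact ⟨⟨fun hx₁ => hx.1 (h hx₁), fun w hw => (hx.2 w (h hw)).trans (hu.2 w hw)⟩, hx.1⟩

lemma mu_le_card_classOf (G : SimpleGraph V) {S : Finset V} {u : V} (hu : u ∉ S) :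
    mu G S ≤ (classOf G S u).card :=
  Nat.sInf_le ⟨u, hu, rfl⟩

theorem stmt2_general (G : SimpleGraph V)
    (V₁ V₂ : Finset V) (hsub : V₁ ⊂ V₂)
    (v : V) (S : Finset V) (hS : S = classOf G V₁ v)
    (hmin : S.card = mu G V₁)
    (hne : (V₂ ∩ S).Nonempty) (hps : V₂ ∩ S ⊂ S) :
    mu G V₂ < mu G V₁ := by
  obtain ⟨u, huS, hu⟩ := Finset.exists_of_ssubset hps
  have huV₂ : u ∉ V₂ := fun h => hu (Finset.mem_inter.mpr ⟨h, huS⟩)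
  have hshrink : S \ V₂ ⊂ S := by
    rw [← Finset.sdiff_inter_self_right]
    exact Finset.sdiff_ssubset Finset.inter_subset_right hne
  subst hS
  calc mu G V₂ ≤ (classOf G V₂ u).card := mu_le_card_classOf G huV₂
    _ ≤ (classOf G V₁ v \ V₂).card := Finset.card_le_card (classOf_subset_sdiff hsub.subset huS)
    _ < (classOf G V₁ v).card := Finset.card_lt_card hshrink
    _ = mu G V₁ := hmin

theorem stmt2 (G : SimpleGraph V) (hG : G.Connected)
    (V₁ V₂ : Finset V) (h1 : V₁.Nonempty) (hsub : V₁ ⊂ V₂)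
    (hproper : V₂ ⊂ Finset.univ)
    (v : V) (hv : v ∉ V₁) (S : Finset V) (hS : S = classOf G V₁ v)
    (hmin : S.card = mu G V₁)
    (hne : (V₂ ∩ S).Nonempty) (hps : V₂ ∩ S ⊂ S) :
    mu G V₂ < mu G V₁ :=
  stmt2_general G V₁ V₂ hsub v S hS hmin hne hps
end

section
/- Let G be a finite connected graph containing no cycle of length 4, and let v_i, v_j be vertices with dist(v_i, v_j) = 2 and let v_ℓ be a common neighbor of v_i and v_j. Then for every vertex v_p ∉ {v_i, v_j, v_ℓ}, the pair (dist(v_p, v_i), dist(v_p, v_j)) differs from (dist(v_ℓ, v_i), dist(v_ℓ, v_j)) = (1, 1). Consequently {v_i, v_j} is a 1-anti-resolving set of G. -/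
open scoped Classical

variable {V : Type*} [Fintype V] [DecidableEq V]

/-! Two distinct vertices of a `C₄`-free graph have at most one common neighbour, since two would
close a `4`-cycle. Hence the common neighbour `vl` of `vi` and `vj` is the only vertex outside
`{vi, vj}` at distance `(1, 1)` from them, so its class is `{vl}`, and classes are never empty. -/

namespace SimpleGraph

section C4Free

variable {W : Type*} (G : SimpleGraph W)

def IsC4Free : Prop :=
  ∀ a b c d : W, a ≠ b → a ≠ c → a ≠ d → b ≠ c → b ≠ d → c ≠ d →
    ¬(G.Adj a b ∧ G.Adj b c ∧ G.Adj c d ∧ G.Adj d a)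

variable {G}

theorem IsC4Free.eq_of_adj_of_adj (hG : G.IsC4Free) {a b l p : W} (hab : a ≠ b)
    (hla : G.Adj l a) (hlb : G.Adj l b) (hpa : G.Adj p a) (hpb : G.Adj p b) : p = l := by
  by_contra hpl
  exact hG a l b p hla.ne.symm hab hpa.ne.symm hlb.ne (Ne.symm hpl) hpb.ne.symm
    ⟨hla.symm, hlb, hpb.symm, hpa⟩

end C4Free

variable {G : SimpleGraph V}

theorem mem_classOf_self {S : Finset V} {v : V} (hv : v ∉ S) : v ∈ classOf G S v :=
  Finset.mem_filter.mpr ⟨Finset.mem_univ _, hv, fun _ _ => rfl⟩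

theorem classOf_eq_singleton {S : Finset V} {v : V} (hv : v ∉ S)
    (h : ∀ u ∉ S, (∀ w ∈ S, G.dist u w = G.dist v w) → u = v) : classOf G S v = {v} :=
  Finset.eq_singleton_iff_unique_mem.mpr ⟨mem_classOf_self hv, fun u hu =>
    have hu' := (Finset.mem_filter.mp hu).2
    h u hu'.1 hu'.2⟩

theorem mu_eq_one_of_classOf_eq_singleton {S : Finset V} {v : V} (hv : v ∉ S)
    (h : classOf G S v = {v}) : mu G S = 1 := by
  have hcard : (classOf G S v).card = 1 := by rw [h, Finset.card_singleton]
  refine le_antisymm (Nat.sInf_le ⟨v, hv, hcard.symm⟩) (le_csInf ⟨1, v, hv, hcard.symm⟩ ?_)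
  rintro n ⟨u, hu, rfl⟩
  exact Finset.card_pos.mpr ⟨u, mem_classOf_self hu⟩

end SimpleGraph

open SimpleGraph

theorem stmt6_general (G : SimpleGraph V)
    (hC4 : ∀ a b c d : V, a ≠ b → a ≠ c → a ≠ d → b ≠ c → b ≠ d → c ≠ d →
      ¬(G.Adj a b ∧ G.Adj b c ∧ G.Adj c d ∧ G.Adj d a))
    (vi vj vl : V) (hij : G.dist vi vj = 2)
    (hli : G.Adj vl vi) (hlj : G.Adj vl vj) :
    (G.dist vl vi = 1 ∧ G.dist vl vj = 1) ∧
    (∀ p, p ≠ vi → p ≠ vj → p ≠ vl → ¬(G.dist p vi = 1 ∧ G.dist p vj = 1)) ∧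
    mu G {vi, vj} = 1 := by
  have hne : vi ≠ vj := fun h => by simp [h] at hij
  have hl : G.dist vl vi = 1 ∧ G.dist vl vj = 1 :=
    ⟨dist_eq_one_iff_adj.mpr hli, dist_eq_one_iff_adj.mpr hlj⟩
  have hunique : ∀ p, G.dist p vi = 1 → G.dist p vj = 1 → p = vl := fun p hpi hpj =>
    IsC4Free.eq_of_adj_of_adj hC4 hne hli hlj (dist_eq_one_iff_adj.mp hpi)
      (dist_eq_one_iff_adj.mp hpj)
  have hlS : vl ∉ ({vi, vj} : Finset V) := by simp [hli.ne, hlj.ne]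
  refine ⟨hl, fun p _ _ hpl ⟨hpi, hpj⟩ => hpl (hunique p hpi hpj), ?_⟩
  refine mu_eq_one_of_classOf_eq_singleton hlS (classOf_eq_singleton hlS fun u _ hdist => ?_)
  simp only [Finset.mem_insert, Finset.mem_singleton, forall_eq_or_imp, forall_eq] at hdist
  exact hunique u (hdist.1.trans hl.1) (hdist.2.trans hl.2)

theorem stmt6 (G : SimpleGraph V) (hG : G.Connected)
    (hn : 4 ≤ Fintype.card V)
    (hC4 : ∀ a b c d : V, a ≠ b → a ≠ c → a ≠ d → b ≠ c → b ≠ d → c ≠ d →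
      ¬(G.Adj a b ∧ G.Adj b c ∧ G.Adj c d ∧ G.Adj d a))
    (vi vj vl : V) (hij : G.dist vi vj = 2)
    (hli : G.Adj vl vi) (hlj : G.Adj vl vj) :
    (G.dist vl vi = 1 ∧ G.dist vl vj = 1) ∧
    (∀ p, p ≠ vi → p ≠ vj → p ≠ vl → ¬(G.dist p vi = 1 ∧ G.dist p vj = 1)) ∧
    mu G {vi, vj} = 1 :=
  stmt6_general G hC4 vi vj vl hij hli hlj
end
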